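/- arXiv:1802.07604 — 3 statements merged into one kernel-verified Lean document; each statement's English description precedes it below -/
import Mathlib

section
/- Let 0 < ρ ≤ 1 and define C(ρ) = sup{ δ ∈ (0, 1/2) : (4+δ)·10^(2δ) / log(1/(2δ)) < ρ }. Then C(ρ) > e^{-1-4/ρ}. -/
/-!
Take `δ = exp (-1/4 - 4/ρ) / 2`, so that `log (1/(2δ)) = 1/4 + 4/ρ` exactly, and `δ` exceeds
`exp (-1 - 4/ρ)` because `2 < exp (3/4)`. The defining inequality then reads
`(4 + δ) 10^(2δ) < 4 + ρ/4`. Since `exp (-4/ρ) ≤ exp (-4) ρ`, we have `δ ≤ ρ/100`, and on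
`[0, 1/100]` the bound `10^(2δ) ≤ 1 + 5δ` makes the left side at most `4 + 21.05 δ < 4 + ρ/4`.
-/

open Real

lemma exp_neg_div_le_exp_neg_mul {c ρ : ℝ} (hc : 1 ≤ c) (hρ0 : 0 < ρ) (hρ1 : ρ ≤ 1) :
    exp (-c / ρ) ≤ exp (-c) * ρ := by
  have hinv : 1 ≤ 1 / ρ := by rw [le_div_iff₀ hρ0]; linarith
  -- `1/ρ ≤ 1 + c (1/ρ - 1) ≤ exp (c (1/ρ - 1))`
  have key : 1 / ρ ≤ exp (c * (1 / ρ - 1)) := by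
    nlinarith [add_one_le_exp (c * (1 / ρ - 1))]
  rw [div_le_iff₀ hρ0] at key
  calc exp (-c / ρ) = exp (-c) * exp (-c * (1 / ρ - 1)) := by rw [← exp_add]; ring_nf
    _ ≤ exp (-c) * ρ := by
      gcongr
      rw [neg_mul, exp_neg, inv_le_iff_one_le_mul₀ (exp_pos _)]
      linarith

lemma fifty_lt_exp_four : (50 : ℝ) < exp 4 := by
  have h := exp_one_gt_d9
  calc (50 : ℝ) < 2.7182818283 ^ 4 := by norm_num
    _ < exp 1 ^ 4 := by gcongr
    _ = exp 4 := by rw [← exp_nat_mul]; norm_num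

lemma two_lt_exp_three_fourths : (2 : ℝ) < exp (3 / 4) := by
  have h := log_two_lt_d9
  rw [← log_lt_iff_lt_exp two_pos]
  linarith

lemma ten_rpow_two_mul_le {δ : ℝ} (h0 : 0 ≤ δ) (h1 : δ ≤ 1 / 100) :
    (10 : ℝ) ^ (2 * δ) ≤ 1 + 5 * δ := by
  have hbase : (10 : ℝ) ≤ (1 + 1 / 20) ^ (50 : ℝ) := by norm_num
  calc (10 : ℝ) ^ (2 * δ) ≤ ((1 + 1 / 20) ^ (50 : ℝ)) ^ (2 * δ) := by gcongr
    _ = (1 + 1 / 20) ^ (100 * δ) := by rw [← rpow_mul (by norm_num)]; ring_nf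
    _ ≤ 1 + 100 * δ * (1 / 20) :=
      rpow_one_add_le_one_add_mul_self (by norm_num) (by positivity) (by linarith)
    _ = 1 + 5 * δ := by ring

lemma log_one_div_two_mul_exp_div_two (x : ℝ) : log (1 / (2 * (exp x / 2))) = -x := by
  rw [mul_div_cancel₀ _ two_ne_zero, one_div, log_inv, log_exp]

lemma half_exp_neg_quarter_sub_div_le {ρ : ℝ} (hρ0 : 0 < ρ) (hρ1 : ρ ≤ 1) :
    exp (-1 / 4 - 4 / ρ) / 2 ≤ ρ / 100 := by
  have hexp := exp_neg_div_le_exp_neg_mul (c := 4) (by norm_num) hρ0 hρ1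
  have h4 : exp (-4) < 1 / 50 := by
    rw [exp_neg, inv_lt_comm₀ (exp_pos _) (by norm_num)]
    simpa using fifty_lt_exp_four
  calc exp (-1 / 4 - 4 / ρ) / 2 ≤ exp (-4 / ρ) / 2 := by gcongr; linarith [neg_div ρ 4]
    _ ≤ ρ / 100 := by nlinarith

lemma half_exp_neg_quarter_sub_div_mem {ρ : ℝ} (hρ0 : 0 < ρ) (hρ1 : ρ ≤ 1) :
    exp (-1 / 4 - 4 / ρ) / 2 ∈ {δ : ℝ | δ ∈ Set.Ioo (0 : ℝ) (1 / 2) ∧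
      (4 + δ) * (10 : ℝ) ^ (2 * δ) / log (1 / (2 * δ)) < ρ} := by
  set δ := exp (-1 / 4 - 4 / ρ) / 2
  have hδ0 : 0 < δ := by positivity
  have hδρ : δ ≤ ρ / 100 := half_exp_neg_quarter_sub_div_le hρ0 hρ1
  have hlog : log (1 / (2 * δ)) = 1 / 4 + 4 / ρ := by
    rw [log_one_div_two_mul_exp_div_two]; ring
  have hpow := ten_rpow_two_mul_le hδ0.le (by linarith)
  refine ⟨⟨hδ0, by linarith⟩, ?_⟩
  rw [hlog, div_lt_iff₀ (by positivity), mul_add, mul_div_cancel₀ _ hρ0.ne']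
  calc (4 + δ) * (10 : ℝ) ^ (2 * δ) ≤ (4 + δ) * (1 + 5 * δ) := by gcongr
    _ < ρ * (1 / 4) + 4 := by nlinarith

lemma exp_neg_one_sub_lt_half_exp_neg_quarter_sub (x : ℝ) :
    exp (-1 - x) < exp (-1 / 4 - x) / 2 := by
  rw [lt_div_iff₀ two_pos, show -1 / 4 - x = 3 / 4 + (-1 - x) by ring, exp_add]
  linarith [mul_lt_mul_of_pos_right two_lt_exp_three_fourths (exp_pos (-1 - x))]

theorem stmt_1 (ρ : ℝ) (hρ0 : 0 < ρ) (hρ1 : ρ ≤ 1) :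
    Real.exp (-1 - 4/ρ) <
      sSup {δ : ℝ | δ ∈ Set.Ioo (0 : ℝ) (1/2) ∧
        (4 + δ) * (10 : ℝ) ^ (2 * δ) / Real.log (1 / (2 * δ)) < ρ} := by
  exact lt_csSup_of_lt ⟨1 / 2, fun δ hδ => hδ.1.2.le⟩ (half_exp_neg_quarter_sub_div_mem hρ0 hρ1)
    (exp_neg_one_sub_lt_half_exp_neg_quarter_sub _)
end

section
/- Let f : ℤ → ℤ be a nonconstant polynomial function. Suppose that for every sufficiently large real x there exist arbitrarily large integers n ≥ 0 such that each of f(n+1), …, f(n+⌊2x⌋) has a prime factor p with deg f < p ≤ x. Then there exists an integer G ≥ 2 such that for every integer k ≥ G there are infinitely many n ≥ 0 with the property that none of f(n+1), …, f(n+k) is coprime to the product of the others. -/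
/-!
Newton's formula `f (m + p) = ∑ₖ (p choose k) Δᵏ f m` shows that for a prime `p > deg F` the
integer-valued polynomial `f` is `p`-periodic modulo `p`: the terms with `k ≥ p` vanish and those
with `0 < k < p` are divisible by `p`. This needs no integrality of the coefficients of `F`.
Taking `x = k / 2`, every `f (n + i)` in the window has a prime factor `p ≤ k / 2`, so one of
`i + p`, `i - p` stays in the window and the corresponding value is divisible by `p` as well;
taking `n` beyond the integer roots of `f` makes the gcd nontrivial.
-/

open Polynomial Finset

lemma fwdDiff_iter_eq_zero_of_cast_eq_eval {f : ℤ → ℤ} {F : ℚ[X]}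
    (heval : ∀ n : ℤ, (f n : ℚ) = F.eval (n : ℚ)) {j : ℕ} (hj : F.natDegree < j) :
    (fwdDiff 1)^[j] f = 0 := by
  funext m
  have hF := congr_fun (fwdDiff_iter_eq_zero_of_degree_lt hj) (m : ℚ)
  rw [fwdDiff_iter_eq_sum_shift] at hF
  rw [fwdDiff_iter_eq_sum_shift, Pi.zero_apply, ← Int.cast_inj (α := ℚ)]
  push_cast
  simpa [heval] using hF

lemma Nat.Prime.dvd_apply_add_sub_of_fwdDiff_iter_eq_zero {f : ℤ → ℤ} {p : ℕ} (hp : p.Prime)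
    (hf : (fwdDiff 1)^[p] f = 0) (m : ℤ) : (p : ℤ) ∣ f (m + p) - f m := by
  obtain ⟨q, rfl⟩ : ∃ q, p = q + 1 := Nat.exists_eq_succ_of_ne_zero hp.ne_zero
  have h := shift_eq_sum_fwdDiff_iter 1 f (q + 1) m
  rw [sum_range_succ, sum_range_succ', hf] at h
  simp only [nsmul_eq_mul, mul_one, Nat.choose_zero_right, Function.iterate_zero, id_eq,
    Pi.zero_apply, mul_zero, add_zero, Nat.cast_one, one_mul] at h
  rw [h, add_sub_cancel_right]
  refine dvd_sum fun k hk => dvd_mul_of_dvd_left (Int.natCast_dvd_natCast.mpr ?_) _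
  exact hp.dvd_choose_self k.succ_ne_zero (by simpa using hk)

lemma exists_forall_ge_ne_zero_of_cast_eq_eval {f : ℤ → ℤ} {F : ℚ[X]} (hF : F ≠ 0)
    (heval : ∀ n : ℤ, (f n : ℚ) = F.eval (n : ℚ)) : ∃ M : ℕ, ∀ m : ℤ, (M : ℤ) ≤ m → f m ≠ 0 := by
  have hfin : {m : ℤ | f m = 0}.Finite := by
    refine ((finite_setOfPred_isRoot hF).preimage Int.cast_injective.injOn).subset fun m hm => ?_
    simp [IsRoot, ← heval, show f m = 0 from hm]
  obtain ⟨M, hM⟩ := hfin.bddAbove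
  refine ⟨M.toNat + 1, fun m hm h0 => ?_⟩
  have := hM (show m ∈ {m : ℤ | f m = 0} from h0)
  omega

lemma Int.one_lt_gcd_of_prime_dvd {a b : ℤ} {p : ℕ} (hp : p.Prime) (ha : a ≠ 0)
    (hpa : (p : ℤ) ∣ a) (hpb : (p : ℤ) ∣ b) : 1 < Int.gcd a b :=
  hp.one_lt.trans_le <| Nat.le_of_dvd (Int.gcd_pos_of_ne_zero_left b ha)
    (Int.natCast_dvd_natCast.mp (Int.dvd_coe_gcd hpa hpb))

lemma exists_mem_Icc_ne_add_or_sub {i k p : ℕ} (hi : i ∈ Icc 1 k) (hp : 0 < p) (hpk : 2 * p ≤ k) :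
    ∃ j ∈ Icc 1 k, j ≠ i ∧ ((j : ℤ) = i + p ∨ (j : ℤ) + p = i) := by
  rw [mem_Icc] at hi
  by_cases h : i + p ≤ k
  · exact ⟨i + p, mem_Icc.mpr ⟨by omega, h⟩, by omega, Or.inl (by push_cast; rfl)⟩
  · exact ⟨i - p, mem_Icc.mpr ⟨by omega, by omega⟩, by omega, Or.inr (by omega)⟩

lemma exists_one_lt_gcd_of_prime_dvd {f : ℤ → ℤ} {p k i : ℕ} (hp : p.Prime)
    (hper : ∀ m, (p : ℤ) ∣ f (m + p) - f m) (hpk : 2 * p ≤ k) (n : ℤ) (hi : i ∈ Icc 1 k)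
    (hne : f (n + i) ≠ 0) (hdvd : (p : ℤ) ∣ f (n + i)) :
    ∃ j ∈ Icc 1 k, j ≠ i ∧ 1 < Int.gcd (f (n + i)) (f (n + j)) := by
  obtain ⟨j, hj, hji, hj'⟩ := exists_mem_Icc_ne_add_or_sub hi hp.pos hpk
  refine ⟨j, hj, hji, Int.one_lt_gcd_of_prime_dvd hp hne hdvd ?_⟩
  rcases hj' with hj' | hj'
  · rw [hj', ← add_assoc]
    exact (dvd_iff_dvd_of_dvd_sub (hper _)).mpr hdvd
  · rw [← hj', ← add_assoc] at hdvd
    exact (dvd_iff_dvd_of_dvd_sub (hper _)).mp hdvd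

theorem stmt_14 (f : ℤ → ℤ) (F : Polynomial ℚ) (hdeg : 1 ≤ F.natDegree)
    (heval : ∀ n : ℤ, (f n : ℚ) = F.eval (n : ℚ))
    (hyp : ∃ x₁ : ℝ, ∀ x : ℝ, x₁ ≤ x → ∀ N : ℕ, ∃ n : ℕ, N ≤ n ∧
      ∀ i ∈ Finset.Icc 1 ⌊2 * x⌋₊, ∃ p : ℕ, p.Prime ∧
        (F.natDegree : ℝ) < p ∧ (p : ℝ) ≤ x ∧ (p : ℤ) ∣ f ((n : ℤ) + i)) :
    ∃ G : ℕ, 2 ≤ G ∧ ∀ k : ℕ, G ≤ k → ∀ N : ℕ, ∃ n : ℕ, N ≤ n ∧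
      ∀ i ∈ Finset.Icc 1 k, ∃ j ∈ Finset.Icc 1 k, j ≠ i ∧
        1 < Int.gcd (f ((n : ℤ) + i)) (f ((n : ℤ) + j)) := by
  obtain ⟨x₁, hx₁⟩ := hyp
  obtain ⟨M, hM⟩ := exists_forall_ge_ne_zero_of_cast_eq_eval (by rintro rfl; simp at hdeg) heval
  refine ⟨max 2 ⌈2 * x₁⌉₊, le_max_left _ _, fun k hk N => ?_⟩
  have hxk : x₁ ≤ k / 2 := by
    have hceil : (⌈2 * x₁⌉₊ : ℝ) ≤ k := by exact_mod_cast (le_max_right _ _).trans hk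
    linarith [Nat.le_ceil (2 * x₁)]
  obtain ⟨n, hn, hprimes⟩ := hx₁ (k / 2) hxk (max N M)
  rw [mul_div_cancel₀ _ two_ne_zero, Nat.floor_natCast] at hprimes
  refine ⟨n, le_of_max_le_left hn, fun i hi => ?_⟩
  obtain ⟨p, hp, hdp, hpk, hdvd⟩ := hprimes i hi
  have hper := Nat.Prime.dvd_apply_add_sub_of_fwdDiff_iter_eq_zero hp
    (fwdDiff_iter_eq_zero_of_cast_eq_eval heval (by exact_mod_cast hdp))
  have hne : f (n + i) ≠ 0 := hM _ (by have := le_of_max_le_right hn; omega)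
  exact exists_one_lt_gcd_of_prime_dvd hp hper (by exact_mod_cast (by linarith : (2 * p : ℝ) ≤ k))
    n hi hne hdvd
end

section
/- Let 0 < a < 1, D > 0, and define recursively P₀ = 1 and P_{j+1} = P_j·exp(−d_{j+1}/P_j), where d_{j+1} are reals satisfying d_{j+1} = (1 + ε_{j+1})·a^j·log(1/a) with |ε_j| ≤ E·a^m for all j ≤ m and some constant E. Then for any constant λ with 1 + log(1/a) < λ < 1/a one has P_j = (1 + O_{λ,E}(λ^j a^m))·a^j for 0 ≤ j ≤ m, provided λ^m·a^m is sufficiently small. -/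
theorem stmt_17 (a D E lam : ℝ) (ha0 : 0 < a) (ha1 : a < 1) (hD : 0 < D)
    (hE : 0 ≤ E) (hlam1 : 1 + Real.log (1 / a) < lam) (hlam2 : lam < 1 / a) :
    ∃ C : ℝ, 0 < C ∧ ∃ ε₀ : ℝ, 0 < ε₀ ∧
      ∀ m : ℕ, ∀ ε d P : ℕ → ℝ,
        (∀ j ≤ m, |ε j| ≤ E * a ^ m) →
        (∀ j < m, d (j + 1) = (1 + ε (j + 1)) * a ^ j * Real.log (1 / a)) →
        P 0 = 1 →
        (∀ j < m, P (j + 1) = P j * Real.exp (-(d (j + 1)) / P j)) →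
        lam ^ m * a ^ m ≤ ε₀ →
        ∀ j ≤ m, |P j - a ^ j| ≤ C * lam ^ j * a ^ m * a ^ j := by
  have hL0 : 0 < Real.log (1 / a) := Real.log_pos (by rw [lt_div_iff₀ ha0]; linarith)
  set L := Real.log (1 / a) with hLdef
  set δ := lam - (1 + L) with hδdef
  have hδ0 : 0 < δ := by simp only [hδdef]; linarith
  set K := 2 * L + δ with hKdef
  have hK0 : 0 < K := by positivity
  set C := E + 2 * L * E / δ + 1 with hCdef
  have hC0 : 0 < C := by positivity
  have hlam1' : 1 < lam := by linarith
  have hlam0 : 0 < lam := by linarith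
  clear_value L δ K C
  refine ⟨C, hC0, min (min (1 / (2 * C)) (1 / (K * C))) (δ / (3 * K ^ 2 * C)),
    by positivity, ?_⟩
  intro m ε d P hε hd hP0 hrec hsmall j
  induction j with
  | zero =>
    intro _
    rw [hP0]
    simp only [pow_zero, sub_self, abs_zero, mul_one]
    positivity
  | succ j ih =>
    intro hj
    have hj' : j ≤ m := Nat.le_of_succ_le hj
    have hjm : j < m := hj
    have IH := ih hj'
    have haj : (0:ℝ) < a ^ j := pow_pos ha0 j
    have ham : (0:ℝ) < a ^ m := pow_pos ha0 m
    set t := C * lam ^ j * a ^ m with htdef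
    have ht0 : 0 < t := by positivity
    clear_value t
    have hlamj1 : (1:ℝ) ≤ lam ^ j := one_le_pow₀ hlam1'.le
    have htm : t ≤ C * (lam ^ m * a ^ m) := by
      rw [htdef, mul_assoc]
      gcongr
      exact hlam1'.le
    have hsm1 : lam ^ m * a ^ m ≤ 1 / (2 * C) :=
      le_trans hsmall (le_trans (min_le_left _ _) (min_le_left _ _))
    have hsm2 : lam ^ m * a ^ m ≤ 1 / (K * C) :=
      le_trans hsmall (le_trans (min_le_left _ _) (min_le_right _ _))
    have hsm3 : lam ^ m * a ^ m ≤ δ / (3 * K ^ 2 * C) :=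
      le_trans hsmall (min_le_right _ _)
    have ht_half : t ≤ 1 / 2 := by
      calc t ≤ C * (lam ^ m * a ^ m) := htm
        _ ≤ C * (1 / (2 * C)) := by gcongr
        _ = 1 / 2 := by field_simp
    have htK : K * t ≤ 1 := by
      have h1 : t ≤ 1 / K := by
        calc t ≤ C * (lam ^ m * a ^ m) := htm
          _ ≤ C * (1 / (K * C)) := by gcongr
          _ = 1 / K := by field_simp
      calc K * t ≤ K * (1 / K) := by gcongr
        _ = 1 := by field_simp
    have htq : K ^ 2 * t ≤ δ / 3 := by
      calc K ^ 2 * t ≤ K ^ 2 * (C * (lam ^ m * a ^ m)) := by gcongr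
        _ ≤ K ^ 2 * (C * (δ / (3 * K ^ 2 * C))) := by gcongr
        _ = δ / 3 := by field_simp
    have hεj : |ε (j + 1)| ≤ E * a ^ m := hε (j + 1) hj
    -- L * (E * a^m) ≤ (δ/2) * t
    have hLE : L * (E * a ^ m) ≤ δ / 2 * t := by
      have hC2 : 2 * L * E / δ ≤ C := by rw [hCdef]; linarith
      have hLEδ : L * E ≤ δ / 2 * C := by
        have h1 := mul_le_mul_of_nonneg_left hC2 (le_of_lt (half_pos hδ0))
        have e1 : δ / 2 * (2 * L * E / δ) = L * E := by field_simp
        linarith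
      calc L * (E * a ^ m) = L * E * a ^ m := by ring
        _ ≤ δ / 2 * C * a ^ m := by gcongr
        _ = δ / 2 * (C * 1 * a ^ m) := by ring
        _ ≤ δ / 2 * (C * lam ^ j * a ^ m) := by gcongr
        _ = δ / 2 * t := by rw [htdef]
    have hPdist : |P j - a ^ j| ≤ t * a ^ j := IH
    have habs := abs_le.mp hPdist
    have hPlb : a ^ j / 2 ≤ P j := by
      have h1 := mul_le_mul_of_nonneg_right ht_half haj.le
      linarith [habs.1]
    have hPj0 : 0 < P j := lt_of_lt_of_le (by positivity) hPlb
    set Q := P j / a ^ j with hQdef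
    have hQpos : 0 < Q := by positivity
    clear_value Q
    have hPQ : P j = Q * a ^ j := by field_simp [hQdef]; rw [hQdef, div_mul_cancel₀ _ haj.ne']
    have hQ1 : |Q - 1| ≤ t := by
      have e1 : Q - 1 = (P j - a ^ j) / a ^ j := by field_simp [hQdef]; rw [hPQ]; ring
      rw [e1, abs_div, abs_of_pos haj, div_le_iff₀ haj]
      exact hPdist
    have hQab := abs_le.mp hQ1
    have hQlb : 1 / 2 ≤ Q := by linarith
    have hQub : Q ≤ 3 / 2 := by linarith
    set u := L * (Q - 1 - ε (j + 1)) / Q with hudef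
    clear_value u
    have hrecj := hrec j hjm
    have hdj := hd j hjm
    have hloga : Real.log a = -L := by
      rw [hLdef, one_div, Real.log_inv]; ring
    have hexpeq : Real.exp (-(d (j + 1)) / P j) = a * Real.exp u := by
      have harg : -(d (j + 1)) / P j = Real.log a + u := by
        rw [hdj, hPQ, hloga, hudef]
        field_simp
        ring
      rw [harg, Real.exp_add, Real.exp_log ha0]
    have hPj1 : P (j + 1) = a ^ (j + 1) * (Q * Real.exp u) := by
      rw [hrecj, hexpeq, hPQ, pow_succ]; ring
    -- bound |u|
    have hsum : |Q - 1 - ε (j + 1)| ≤ t + E * a ^ m := by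
      calc |Q - 1 - ε (j + 1)| = |(Q - 1) + (-(ε (j + 1)))| := by ring_nf
        _ ≤ |Q - 1| + |(-(ε (j + 1)))| := abs_add_le _ _
        _ = |Q - 1| + |ε (j + 1)| := by rw [abs_neg]
        _ ≤ t + E * a ^ m := add_le_add hQ1 hεj
    have hu : |u| ≤ K * t := by
      rw [hudef, abs_div, abs_mul, abs_of_pos hL0, abs_of_pos hQpos, div_le_iff₀ hQpos]
      have h1 := mul_le_mul_of_nonneg_left hsum hL0.le
      have e1 : K * t * Q - K / 2 * t = K * t * (Q - 1 / 2) := by ring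
      have e2 : 0 ≤ K * t * (Q - 1 / 2) :=
        mul_nonneg (mul_nonneg hK0.le ht0.le) (by linarith)
      have e3 : K / 2 * t = L * t + δ / 2 * t := by rw [hKdef]; ring
      have e4 : L * (t + E * a ^ m) = L * t + L * (E * a ^ m) := by ring
      linarith [hLE]
    have hu1 : |u| ≤ 1 := le_trans hu htK
    have hquad : |Real.exp u - 1 - u| ≤ u ^ 2 := Real.abs_exp_sub_one_sub_id_le hu1
    have hQu : Q * u = L * (Q - 1 - ε (j + 1)) := by
      rw [hudef]; field_simp
    have hdecomp : Q * Real.exp u - 1 =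
        Q * (Real.exp u - 1 - u) + L * (Q - 1) - L * ε (j + 1) + (Q - 1) := by
      linear_combination hQu
    have a1 : |Q * (Real.exp u - 1 - u)| ≤ Q * u ^ 2 := by
      rw [abs_mul, abs_of_pos hQpos]
      exact mul_le_mul_of_nonneg_left hquad hQpos.le
    have a2 : |L * (Q - 1)| ≤ L * t := by
      rw [abs_mul, abs_of_pos hL0]
      exact mul_le_mul_of_nonneg_left hQ1 hL0.le
    have a3 : |L * ε (j + 1)| ≤ L * (E * a ^ m) := by
      rw [abs_mul, abs_of_pos hL0]
      exact mul_le_mul_of_nonneg_left hεj hL0.le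
    have a4 : Q * u ^ 2 ≤ δ / 2 * t := by
      have hu' := abs_le.mp hu
      have hu2 : u ^ 2 ≤ (K * t) ^ 2 := sq_le_sq' hu'.1 hu'.2
      have s1 : Q * u ^ 2 ≤ 3 / 2 * (K * t) ^ 2 :=
        mul_le_mul hQub hu2 (sq_nonneg u) (by norm_num)
      have s2 : 3 / 2 * (K * t) ^ 2 ≤ δ / 2 * t := by
        have h1 := mul_le_mul_of_nonneg_right htq ht0.le
        linarith [h1]
      linarith
    have hcore : |Q * Real.exp u - 1| ≤ lam * t := by
      rw [hdecomp, abs_le]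
      have b1 := abs_le.mp a1
      have b2 := abs_le.mp a2
      have b3 := abs_le.mp a3
      have b4 := hQab
      have hlameq : lam = 1 + L + δ := by rw [hδdef]; ring
      have e5 : lam * t = t + L * t + δ * t := by rw [hlameq]; ring
      constructor <;> linarith [a4, hLE, b1.1, b1.2, b2.1, b2.2, b3.1, b3.2, b4.1, b4.2]
    have hgoal_eq : C * lam ^ (j + 1) * a ^ m * a ^ (j + 1) = lam * t * a ^ (j + 1) := by
      rw [htdef, pow_succ]; ring
    rw [hPj1, hgoal_eq]
    have hfac : a ^ (j + 1) * (Q * Real.exp u) - a ^ (j + 1) =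
        a ^ (j + 1) * (Q * Real.exp u - 1) := by ring
    rw [hfac, abs_mul, abs_of_pos (pow_pos ha0 (j + 1)), mul_comm (lam * t)]
    exact mul_le_mul_of_nonneg_left hcore (pow_pos ha0 (j + 1)).le
end
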